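/- The logarithmic map on the manifold of Hermitian positive definite matrices is equivariant under congruence: for any invertible matrix a and Hermitian positive definite p, q, one has a* Log_p(q) a = Log_{a* p a}(a* q a). -/

import Mathlib

open Matrix
open scoped ComplexOrder Classical

/-- Matrix logarithm of a Hermitian (in particular HPD) matrix, via the spectral theorem. -/
noncomputable def mLog {d : ℕ} (A : Matrix (Fin d) (Fin d) ℂ) : Matrix (Fin d) (Fin d) ℂ :=
  if hA : A.IsHermitian then
    (hA.eigenvectorUnitary : Matrix (Fin d) (Fin d) ℂ) *
      Matrix.diagonal (fun i => (Real.log (hA.eigenvalues i) : ℂ)) *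
      (star hA.eigenvectorUnitary : Matrix (Fin d) (Fin d) ℂ)
  else 0

/-- Matrix exponential. -/
noncomputable def mExp {d : ℕ} (A : Matrix (Fin d) (Fin d) ℂ) : Matrix (Fin d) (Fin d) ℂ :=
  NormedSpace.exp A

/-- Hermitian positive (semi)definite square root. -/
noncomputable def msqrt {d : ℕ} (A : Matrix (Fin d) (Fin d) ℂ) : Matrix (Fin d) (Fin d) ℂ :=
  if hA : A.PosSemidef then
    (hA.1.eigenvectorUnitary : Matrix (Fin d) (Fin d) ℂ) *
      Matrix.diagonal ((↑) ∘ Real.sqrt ∘ hA.1.eigenvalues) *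
      (star hA.1.eigenvectorUnitary : Matrix (Fin d) (Fin d) ℂ)
  else 1

/-- Frobenius norm. -/
noncomputable def frobNorm {d : ℕ} (A : Matrix (Fin d) (Fin d) ℂ) : ℝ :=
  Real.sqrt ((Aᴴ * A).trace.re)

/-- Affine-invariant Riemannian distance. -/
noncomputable def deltaR {d : ℕ} (p₁ p₂ : Matrix (Fin d) (Fin d) ℂ) : ℝ :=
  frobNorm (mLog ((msqrt p₁)⁻¹ * p₂ * (msqrt p₁)⁻¹))

/-- Real matrix power of an HPD matrix: `x^t = Exp (t • Log x)`. -/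
noncomputable def mPow {d : ℕ} (A : Matrix (Fin d) (Fin d) ℂ) (t : ℝ) : Matrix (Fin d) (Fin d) ℂ :=
  mExp ((t : ℂ) • mLog A)

/-- Riemannian logarithmic map at `p`. -/
noncomputable def logMap {d : ℕ} (p q : Matrix (Fin d) (Fin d) ℂ) : Matrix (Fin d) (Fin d) ℂ :=
  msqrt p * mLog ((msqrt p)⁻¹ * q * (msqrt p)⁻¹) * msqrt p

/-- Riemannian exponential map at `p`. -/
noncomputable def expMap {d : ℕ} (p h : Matrix (Fin d) (Fin d) ℂ) : Matrix (Fin d) (Fin d) ℂ :=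
  msqrt p * mExp ((msqrt p)⁻¹ * h * (msqrt p)⁻¹) * msqrt p

/-- Affine-invariant geodesic from `p₁` to `p₂`. -/
noncomputable def geo {d : ℕ} (p₁ p₂ : Matrix (Fin d) (Fin d) ℂ) (t : ℝ) :
    Matrix (Fin d) (Fin d) ℂ :=
  msqrt p₁ * mPow ((msqrt p₁)⁻¹ * p₂ * (msqrt p₁)⁻¹) t * msqrt p₁

/-!
Write `s = p^{1/2}` and `r = (a* p a)^{1/2}`. Since `r² = a* s² a`, the matrix `u = r⁻¹ a* s` is
unitary, and `r⁻¹ (a* q a) r⁻¹ = u (s⁻¹ q s⁻¹) u*`. The logarithm is a continuous functional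
calculus, so it commutes with the ⋆-automorphism `x ↦ u x u*`; hence
`Log_{a* p a}(a* q a) = r u Log(s⁻¹ q s⁻¹) u* r = a* s Log(s⁻¹ q s⁻¹) s a`.
-/

lemma mLog_eq_cfc {d : ℕ} {A : Matrix (Fin d) (Fin d) ℂ} (hA : A.IsHermitian) :
    mLog A = cfc Real.log A := by
  rw [mLog, dif_pos hA, hA.cfc_eq, IsHermitian.cfc]
  rfl

lemma mLog_unitary_conj {d : ℕ} {u A : Matrix (Fin d) (Fin d) ℂ} (hu : u ∈ unitary _)
    (hA : A.IsHermitian) : mLog (u * A * star u) = u * mLog A * star u := by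
  set φ := Unitary.conjStarAlgAut ℂ (Matrix (Fin d) (Fin d) ℂ) ⟨u, hu⟩
  have hφ : Continuous φ := LinearMap.continuous_of_finiteDimensional φ.toAlgEquiv.toLinearMap
  have hφA : (φ A).IsHermitian := hA.isSelfAdjoint.map φ
  change mLog (φ A) = φ (mLog A)
  rw [mLog_eq_cfc hA, mLog_eq_cfc hφA]
  exact (StarAlgHomClass.map_cfc φ Real.log A
    ((finite_real_spectrum (A := A)).continuousOn _) hφ hA hφA).symm

section Sqrt

open scoped MatrixOrder

lemma msqrt_eq_sqrt {d : ℕ} {A : Matrix (Fin d) (Fin d) ℂ} (hA : A.PosSemidef) :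
    msqrt A = CFC.sqrt A := by
  rw [CFC.sqrt_eq_real_sqrt A hA.nonneg, cfcₙ_eq_cfc, msqrt, dif_pos hA, hA.1.cfc_eq,
    IsHermitian.cfc]
  rfl

lemma isHermitian_msqrt {d : ℕ} {A : Matrix (Fin d) (Fin d) ℂ} (hA : A.PosSemidef) :
    (msqrt A).IsHermitian := by
  rw [msqrt_eq_sqrt hA]
  exact (CFC.sqrt_nonneg A).posSemidef.1

lemma msqrt_mul_self {d : ℕ} {A : Matrix (Fin d) (Fin d) ℂ} (hA : A.PosSemidef) :
    msqrt A * msqrt A = A := by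
  rw [msqrt_eq_sqrt hA, CFC.sqrt_mul_sqrt_self A hA.nonneg]

end Sqrt

lemma isUnit_det_msqrt {d : ℕ} {A : Matrix (Fin d) (Fin d) ℂ} (hA : A.PosDef) :
    IsUnit (msqrt A).det := by
  have h : IsUnit ((msqrt A).det * (msqrt A).det) := by
    rw [← det_mul, msqrt_mul_self hA.posSemidef]
    exact hA.det_pos.ne'.isUnit
  exact (IsUnit.mul_iff.mp h).1

section Congruence

variable {n α : Type*} [Fintype n] [DecidableEq n] [CommRing α] [StarRing α]
  {a s r : Matrix n n α}

lemma star_inv_mul_conjTranspose_mul (hs : s.IsHermitian) (hr : r.IsHermitian) :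
    star (r⁻¹ * aᴴ * s) = s * a * r⁻¹ := by
  simp only [star_eq_conjTranspose, conjTranspose_mul, conjTranspose_nonsing_inv,
    conjTranspose_conjTranspose, hs.eq, hr.eq, Matrix.mul_assoc]

lemma inv_mul_conjTranspose_mul_mem_unitaryGroup (hs : s.IsHermitian) (hr : r.IsHermitian)
    (hr₀ : IsUnit r.det) (h : r * r = aᴴ * (s * s) * a) :
    r⁻¹ * aᴴ * s ∈ unitaryGroup n α := by
  rw [mem_unitaryGroup_iff, star_inv_mul_conjTranspose_mul hs hr]
  calc r⁻¹ * aᴴ * s * (s * a * r⁻¹) = r⁻¹ * (aᴴ * (s * s) * a) * r⁻¹ := by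
        simp only [Matrix.mul_assoc]
    _ = 1 := by rw [← h, ← Matrix.mul_assoc, nonsing_inv_mul _ hr₀, one_mul, mul_nonsing_inv _ hr₀]

lemma inv_mul_conjTranspose_mul_mul_inv (hs₀ : IsUnit s.det) (x : Matrix n n α) :
    r⁻¹ * (aᴴ * x * a) * r⁻¹ = r⁻¹ * aᴴ * s * (s⁻¹ * x * s⁻¹) * (s * a * r⁻¹) := by
  simp only [Matrix.mul_assoc, mul_nonsing_inv_cancel_left _ _ hs₀,
    nonsing_inv_mul_cancel_left _ _ hs₀]

lemma mul_inv_mul_conjTranspose_mul (hr₀ : IsUnit r.det) (y : Matrix n n α) :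
    r * (r⁻¹ * aᴴ * s * y * (s * a * r⁻¹)) * r = aᴴ * (s * y * s) * a := by
  simp only [Matrix.mul_assoc, mul_nonsing_inv_cancel_left _ _ hr₀, nonsing_inv_mul _ hr₀,
    mul_one]

end Congruence

theorem logMap_congruence_equivariant {d : ℕ} (p q a : Matrix (Fin d) (Fin d) ℂ)
    (hp : p.PosDef) (hq : q.PosDef) (ha : IsUnit a.det) :
    aᴴ * logMap p q * a = logMap (aᴴ * p * a) (aᴴ * q * a) := by
  have hpa : (aᴴ * p * a).PosDef :=
    (Matrix.IsUnit.posDef_star_left_conjugate_iff ((isUnit_iff_isUnit_det a).mpr ha)).mpr hp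
  have hsr : msqrt (aᴴ * p * a) * msqrt (aᴴ * p * a) = aᴴ * (msqrt p * msqrt p) * a := by
    rw [msqrt_mul_self hp.posSemidef, msqrt_mul_self hpa.posSemidef]
  have hs := isHermitian_msqrt hp.posSemidef
  have hr := isHermitian_msqrt hpa.posSemidef
  have hs₀ := isUnit_det_msqrt hp
  have hr₀ := isUnit_det_msqrt hpa
  rw [logMap, logMap]
  generalize msqrt p = s at *
  generalize msqrt (aᴴ * p * a) = r at *
  have hqs : (s⁻¹ * q * s⁻¹).IsHermitian := by
    simpa only [hs.inv.eq] using isHermitian_conjTranspose_mul_mul s⁻¹ hq.1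
  have hu := inv_mul_conjTranspose_mul_mem_unitaryGroup hs hr hr₀ hsr
  rw [inv_mul_conjTranspose_mul_mul_inv hs₀, ← star_inv_mul_conjTranspose_mul hs hr,
    mLog_unitary_conj hu hqs, star_inv_mul_conjTranspose_mul hs hr,
    mul_inv_mul_conjTranspose_mul hr₀]
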